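/- Let δ ∈ (0,1/2), η > 0, and set θ = 3(1−δ)η/δ. Let μ_j = δ μ_{j,F} + (1−δ) μ_{j,B} ∈ P_δ for j = 1,2. Then for every z ∈ S_F(θ)^c ∩ S_B(η), one has T(μ1 − μ2)(z) > 2(1−δ)η. -/

import Mathlib

open MeasureTheory Set

/-- CDF of `|f|` with respect to `ν`: `Λ(f)(t) = ν{z : |f(z)| < t}`. -/
noncomputable def Lambda {X : Type*} [MeasurableSpace X] (ν : Measure X) (f : X → ℝ) (t : ℝ) : ℝ :=
  (ν {z | |f z| < t}).toReal

/-- Inverse CDF: `f#(u) = sup {t : Λ(f)(t) ≤ u}`. -/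
noncomputable def invCDF {X : Type*} [MeasurableSpace X] (ν : Measure X) (f : X → ℝ) (u : ℝ) : ℝ :=
  sSup {t : ℝ | Lambda ν f t ≤ u}

/-- Witness function of the signed measure `μ₁ - μ₂`:
`U(μ₁-μ₂)(z) = ∫ K(z,x) dμ₁(x) - ∫ K(z,x) dμ₂(x)`. -/
noncomputable def witness {X : Type*} [MeasurableSpace X] (K : X → X → ℝ)
    (μ₁ μ₂ : Measure X) (z : X) : ℝ :=
  (∫ x, K z x ∂μ₁) - ∫ x, K z x ∂μ₂

/-- `kdiff(μ₁,μ₂;α) = (T(μ₁-μ₂))#(α)` where `T(μ₁-μ₂) = |U(μ₁-μ₂)|`. -/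
noncomputable def kdiff {X : Type*} [MeasurableSpace X] (ν : Measure X) (K : X → X → ℝ)
    (μ₁ μ₂ : Measure X) (α : ℝ) : ℝ :=
  invCDF ν (fun z => |witness K μ₁ μ₂ z|) α

/-- Mixture `δ μF + (1-δ) μB`. -/
noncomputable def mix {X : Type*} [MeasurableSpace X] (δ : ℝ) (μF μB : Measure X) : Measure X :=
  ENNReal.ofReal δ • μF + ENNReal.ofReal (1 - δ) • μB

/-- `S(η) = {z : T(μ₁-μ₂)(z) < η}`. -/
def Sset {X : Type*} [MeasurableSpace X] (K : X → X → ℝ) (μ₁ μ₂ : Measure X) (η : ℝ) : Set X :=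
  {z | |witness K μ₁ μ₂ z| < η}

/-- `G(θ,η) = (S_F(θ)ᶜ ∩ S_B(η)) ∪ (S_B(θ)ᶜ ∩ S_F(η))`. -/
def Gset {X : Type*} [MeasurableSpace X] (K : X → X → ℝ)
    (μ1F μ2F μ1B μ2B : Measure X) (θ η : ℝ) : Set X :=
  ((Sset K μ1F μ2F θ)ᶜ ∩ Sset K μ1B μ2B η) ∪ ((Sset K μ1B μ2B θ)ᶜ ∩ Sset K μ1F μ2F η)

/-!
The witness function is linear in the measures, so for mixtures
`U(μ₁ - μ₂) = δ U(μ_{1,F} - μ_{2,F}) + (1 - δ) U(μ_{1,B} - μ_{2,B})`.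
Off `S_F(θ)` the foreground term has size at least `δθ = 3(1 - δ)η`, while on `S_B(η)` the
background term has size below `(1 - δ)η`; the reverse triangle inequality leaves more than
`2(1 - δ)η`.
-/

lemma integral_mix {X : Type*} [MeasurableSpace X] {δ : ℝ} (hδ0 : 0 ≤ δ) (hδ1 : δ ≤ 1)
    {μF μB : Measure X} {f : X → ℝ} (hF : Integrable f μF) (hB : Integrable f μB) :
    ∫ x, f x ∂(mix δ μF μB) = δ * ∫ x, f x ∂μF + (1 - δ) * ∫ x, f x ∂μB := by
  rw [mix, integral_add_measure (hF.smul_measure ENNReal.ofReal_ne_top)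
      (hB.smul_measure ENNReal.ofReal_ne_top),
    integral_smul_measure, integral_smul_measure,
    ENNReal.toReal_ofReal hδ0, ENNReal.toReal_ofReal (sub_nonneg.mpr hδ1), smul_eq_mul, smul_eq_mul]

lemma witness_mix {X : Type*} [MeasurableSpace X] {K : X → X → ℝ} {δ : ℝ}
    (hδ0 : 0 ≤ δ) (hδ1 : δ ≤ 1) {μ1F μ1B μ2F μ2B : Measure X} {z : X}
    (h1F : Integrable (K z) μ1F) (h1B : Integrable (K z) μ1B)
    (h2F : Integrable (K z) μ2F) (h2B : Integrable (K z) μ2B) :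
    witness K (mix δ μ1F μ1B) (mix δ μ2F μ2B) z =
      δ * witness K μ1F μ2F z + (1 - δ) * witness K μ1B μ2B z := by
  rw [witness, witness, witness, integral_mix hδ0 hδ1 h1F h1B, integral_mix hδ0 hδ1 h2F h2B]
  ring

lemma integrable_of_measurable_uncurry_of_bounded {X : Type*} [MeasurableSpace X]
    {K : X → X → ℝ} (hKmeas : Measurable (Function.uncurry K)) {C : ℝ} (hC : ∀ x y, |K x y| ≤ C)
    (z : X) (μ : Measure X) [IsFiniteMeasure μ] : Integrable (K z) μ :=
  .of_bound (hKmeas.comp measurable_prodMk_left).aestronglyMeasurable C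
    (.of_forall fun x => hC z x)

lemma sub_lt_abs_mix {δ θ η a b : ℝ} (hδ0 : 0 ≤ δ) (hδ1 : δ < 1) (ha : θ ≤ |a|) (hb : |b| < η) :
    δ * θ - (1 - δ) * η < |δ * a + (1 - δ) * b| :=
  calc δ * θ - (1 - δ) * η < |δ * a| - |(1 - δ) * b| := by
        rw [abs_mul, abs_mul, abs_of_nonneg hδ0, abs_of_pos (sub_pos.mpr hδ1)]
        have := mul_le_mul_of_nonneg_left ha hδ0
        have := mul_lt_mul_of_pos_left hb (sub_pos.mpr hδ1)
        linarith
    _ ≤ |δ * a + (1 - δ) * b| := abs_sub_abs_le_abs_add _ _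

theorem stmt7_general {X : Type*} [MeasurableSpace X]
    (K : X → X → ℝ) (hKmeas : Measurable (Function.uncurry K))
    (hKbd : ∃ C : ℝ, ∀ x y, |K x y| ≤ C)
    (δ : ℝ) (hδ : δ ∈ Ioo (0 : ℝ) (1 / 2))
    (η : ℝ)
    (μ1F μ1B μ2F μ2B : Measure X)
    [IsProbabilityMeasure μ1F] [IsProbabilityMeasure μ1B]
    [IsProbabilityMeasure μ2F] [IsProbabilityMeasure μ2B] :
    ∀ z ∈ (Sset K μ1F μ2F (3 * (1 - δ) * η / δ))ᶜ ∩ Sset K μ1B μ2B η,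
      2 * (1 - δ) * η < |witness K (mix δ μ1F μ1B) (mix δ μ2F μ2B) z| := by
  rintro z ⟨hF, hB⟩
  obtain ⟨C, hC⟩ := hKbd
  obtain ⟨hδ0, hδ2⟩ := hδ
  have hδ1 : δ < 1 := by linarith
  have hK := integrable_of_measurable_uncurry_of_bounded hKmeas hC z
  rw [witness_mix hδ0.le hδ1.le (hK μ1F) (hK μ1B) (hK μ2F) (hK μ2B)]
  have hmix := sub_lt_abs_mix hδ0.le hδ1 (not_lt.mp hF) hB
  rw [mul_div_cancel₀ _ hδ0.ne'] at hmix
  linarith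

/-- with `θ = 3(1-δ)η/δ`, for every `z ∈ S_F(θ)ᶜ ∩ S_B(η)` one has
`T(μ₁-μ₂)(z) > 2(1-δ)η`. -/
theorem stmt7 {X : Type*} [MetricSpace X] [MeasurableSpace X] [BorelSpace X]
    (K : X → X → ℝ) (hKmeas : Measurable (Function.uncurry K))
    (hKbd : ∃ C : ℝ, ∀ x y, |K x y| ≤ C)
    (δ : ℝ) (hδ : δ ∈ Ioo (0 : ℝ) (1 / 2))
    (η : ℝ) (hη : 0 < η)
    (μ1F μ1B μ2F μ2B : Measure X)
    [IsProbabilityMeasure μ1F] [IsProbabilityMeasure μ1B]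
    [IsProbabilityMeasure μ2F] [IsProbabilityMeasure μ2B] :
    ∀ z ∈ (Sset K μ1F μ2F (3 * (1 - δ) * η / δ))ᶜ ∩ Sset K μ1B μ2B η,
      2 * (1 - δ) * η < |witness K (mix δ μ1F μ1B) (mix δ μ2F μ2B) z| :=
  stmt7_general K hKmeas hKbd δ hδ η μ1F μ1B μ2F μ2B
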